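/- Suppose an algorithm A is β-uniformly stable. Then the expected generalization gap satisfies |E_{D}[L(A(D)) - L_N(A(D))]| ≤ β, where L is population risk under distribution P and L_N is empirical risk on the N i.i.d. samples D. -/

import Mathlib

/-!
Put a fresh sample `z` next to `D`. Exchanging `z` with the `i`-th sample leaves the law of
`(D, z)` invariant, so `E[ℓ (A D) (D i)] = E[ℓ (A (D with D i := z)) z]`, while
`E[L (A D)] = E[ℓ (A D) z]`. By stability the two integrands differ by at most `β` everywhere;
averaging over `i` gives the bound.
-/

open MeasureTheory

section

variable {X : Type*} [MeasurableSpace X] {ι : Type*} [Fintype ι] [DecidableEq ι]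

theorem measurePreserving_update_eval (μ : Measure X) [SigmaFinite μ] (i : ι) :
    MeasurePreserving (fun p : (ι → X) × X => (Function.update p.1 i p.2, p.1 i))
      ((Measure.pi fun _ => μ).prod μ) ((Measure.pi fun _ => μ).prod μ) := by
  -- Identifying `(ι → X) × X` with `Option ι → X`, the map transposes `some i` and `none`.
  let e := MeasurableEquiv.piOptionEquivProd fun _ : Option ι => X
  let σ := MeasurableEquiv.arrowCongr' (Equiv.swap (some i) none) (MeasurableEquiv.refl X)
  have he : MeasurePreserving e.symm ((Measure.pi fun _ => μ).prod μ) (Measure.pi fun _ => μ) :=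
    ⟨e.symm.measurable, Measure.pi_map_piOptionEquivProd fun _ => μ⟩
  have hσ : MeasurePreserving σ (Measure.pi fun _ => μ) (Measure.pi fun _ => μ) :=
    measurePreserving_arrowCongr' _ _ _ _ fun _ => MeasurePreserving.id μ
  have he_apply (q) : e q = (fun j => q (some j), q none) := rfl
  have he_symm_apply (p) : e.symm p = fun o => o.elim p.2 p.1 :=
    funext fun o => by cases o <;> rfl
  have hσ_apply (q) : σ q = q ∘ Equiv.swap (some i) none := rfl
  convert (he.symm e.symm).comp (hσ.comp he) using 1
  ext p j
  · rcases eq_or_ne j i with rfl | hj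
    · simp [he_apply, he_symm_apply, hσ_apply]
    · simp [he_apply, he_symm_apply, hσ_apply, hj, Equiv.swap_apply_of_ne_of_ne]
  · simp [he_apply, he_symm_apply, hσ_apply]

variable (μ : Measure X) [IsProbabilityMeasure μ] {f : (ι → X) → X → ℝ}

theorem integral_apply_eval_eq_integral_update (hf : Measurable (Function.uncurry f)) (i : ι) :
    ∫ D, f D (D i) ∂(Measure.pi fun _ => μ)
      = ∫ p, f (Function.update p.1 i p.2) p.2 ∂((Measure.pi fun _ => μ).prod μ) := by
  have hΦ := measurePreserving_update_eval μ i
  have hg : Measurable fun p : (ι → X) × X => f p.1 (p.1 i) :=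
    hf.comp (measurable_fst.prodMk ((measurable_pi_apply i).comp measurable_fst))
  calc ∫ D, f D (D i) ∂(Measure.pi fun _ => μ)
      = ∫ p, f p.1 (p.1 i) ∂((Measure.pi fun _ => μ).prod μ) := by
        simp [integral_fun_fst (fun D : ι → X => f D (D i))]
    _ = ∫ p, f (Function.update p.1 i p.2) (Function.update p.1 i p.2 i)
          ∂((Measure.pi fun _ => μ).prod μ) := by
        conv_lhs => rw [← hΦ.map_eq]
        exact integral_map hΦ.measurable.aemeasurable hg.aestronglyMeasurable
    _ = _ := by simp

variable {C β : ℝ}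

theorem abs_integral_integral_sub_integral_eval_le (hf : Measurable (Function.uncurry f))
    (hC : ∀ D z, |f D z| ≤ C) (i : ι)
    (hstable : ∀ D z, |f D z - f (Function.update D i z) z| ≤ β) :
    |∫ D, ∫ z, f D z ∂μ ∂(Measure.pi fun _ => μ) - ∫ D, f D (D i) ∂(Measure.pi fun _ => μ)|
      ≤ β := by
  have hint : Integrable (Function.uncurry f) ((Measure.pi fun _ => μ).prod μ) :=
    .of_bound hf.aestronglyMeasurable C (ae_of_all _ fun p => hC p.1 p.2)
  have hint_update : Integrable (fun p : (ι → X) × X => f (Function.update p.1 i p.2) p.2)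
      ((Measure.pi fun _ => μ).prod μ) :=
    .of_bound (hf.comp (measurable_update'.prodMk measurable_snd)).aestronglyMeasurable C
      (ae_of_all _ fun p => hC _ _)
  rw [integral_integral hint, integral_apply_eval_eq_integral_update μ hf i,
    ← integral_sub (f := fun p : (ι → X) × X => f p.1 p.2) hint hint_update, ← Real.norm_eq_abs]
  refine (norm_integral_le_of_norm_le_const (C := β) (ae_of_all _ fun p => ?_)).trans_eq (by simp)
  exact hstable p.1 p.2

theorem abs_integral_integral_sub_mean_eval_le [Nonempty ι] (hf : Measurable (Function.uncurry f))
    (hC : ∀ D z, |f D z| ≤ C)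
    (hstable : ∀ D i z, |f D z - f (Function.update D i z) z| ≤ β) :
    |∫ D, (∫ z, f D z ∂μ - (Fintype.card ι : ℝ)⁻¹ * ∑ i, f D (D i))
        ∂(Measure.pi fun _ => μ)| ≤ β := by
  set π := Measure.pi fun _ : ι => μ
  have hn : (Fintype.card ι : ℝ) ≠ 0 := by positivity
  have hint_eval (i : ι) : Integrable (fun D => f D (D i)) π :=
    .of_bound (hf.comp (measurable_id.prodMk (measurable_pi_apply i))).aestronglyMeasurable C
      (ae_of_all _ fun D => hC _ _)
  have hint_risk : Integrable (fun D => ∫ z, f D z ∂μ) π :=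
    (Integrable.of_bound hf.aestronglyMeasurable C
      (ae_of_all (π.prod μ) fun p => hC p.1 p.2)).integral_prod_left
  have hgap (i : ι) := abs_integral_integral_sub_integral_eval_le μ hf hC i (hstable · i)
  have expand : ∫ D, (∫ z, f D z ∂μ - (Fintype.card ι : ℝ)⁻¹ * ∑ i, f D (D i)) ∂π
      = (Fintype.card ι : ℝ)⁻¹ * ∑ i, (∫ D, ∫ z, f D z ∂μ ∂π - ∫ D, f D (D i) ∂π) := by
    rw [integral_sub hint_risk ((integrable_finsetSum _ fun i _ => hint_eval i).const_mul _),
      integral_const_mul, integral_finsetSum _ fun i _ => hint_eval i, Finset.sum_sub_distrib,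
      Finset.sum_const, Finset.card_univ, nsmul_eq_mul]
    field_simp
  calc _ = (Fintype.card ι : ℝ)⁻¹ * |∑ i, (∫ D, ∫ z, f D z ∂μ ∂π - ∫ D, f D (D i) ∂π)| := by
        rw [expand, abs_mul, abs_inv, Nat.abs_cast]
    _ ≤ (Fintype.card ι : ℝ)⁻¹ * (Fintype.card ι * β) := by
        gcongr
        exact (Finset.abs_sum_le_sum_abs _ _).trans <|
          (Finset.sum_le_sum fun i _ => hgap i).trans_eq (by simp)
    _ = β := by field_simp

end

/-- Bousquet–Elisseeff: a β-uniformly stable algorithm has expected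
generalization gap at most β. -/
theorem stability_generalization_in_expectation
    {X : Type*} [MeasurableSpace X] (P : Measure X) [IsProbabilityMeasure P]
    {Θ : Type*} (N : ℕ) (hN : 1 ≤ N)
    (ℓ : Θ → X → ℝ) (M β : ℝ)
    (hbound : ∀ θ x, ℓ θ x ∈ Set.Icc 0 M)
    (A : (Fin N → X) → Θ)
    (hmeas : Measurable fun p : (Fin N → X) × X => ℓ (A p.1) p.2)
    (hstable : ∀ (D : Fin N → X) (i : Fin N) (x : X) (z : X),
      |ℓ (A D) z - ℓ (A (Function.update D i x)) z| ≤ β) :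
    |∫ D, ((∫ x, ℓ (A D) x ∂P) - (1 / N) * ∑ i, ℓ (A D) (D i))
        ∂(Measure.pi fun _ : Fin N => P)| ≤ β := by
  have : Nonempty (Fin N) := ⟨⟨0, hN⟩⟩
  have hM (θ : Θ) (x : X) : |ℓ θ x| ≤ M := (abs_of_nonneg (hbound θ x).1).trans_le (hbound θ x).2
  simpa using abs_integral_integral_sub_mean_eval_le P (f := fun D z => ℓ (A D) z) hmeas
    (fun D z => hM (A D) z) fun D i z => hstable D i z z
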